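/- arXiv:2512.24059 — 5 statements merged into one kernel-verified Lean document; each statement's English description precedes it below -/
import Mathlib

section
/- Let {τ_k} be a sequence of nonnegative reals with τ_k → 0, and let {a_k} be a sequence of nonnegative reals such that (1/T)·∑_{i=1}^T a_i ≤ τ_T for all T ≥ 1. Then there exists a strictly increasing sequence of indices {T_k} with T_k > 1 such that a_{T_k} ≤ (1/(T_k−1))·∑_{j=1}^{T_k−1} a_j ≤ τ_{T_k−1} for all k. -/
open Finset

theorem stmt_0 (τ a : ℕ → ℝ)
    (hτ : ∀ k, 0 ≤ τ k) (ha : ∀ k, 0 ≤ a k)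
    (hτ0 : Filter.Tendsto τ Filter.atTop (nhds 0))
    (hb : ∀ T : ℕ, 1 ≤ T → (1 / (T : ℝ)) * ∑ i ∈ Finset.Icc 1 T, a i ≤ τ T) :
    ∃ T : ℕ → ℕ, StrictMono T ∧ ∀ k,
      1 < T k ∧
      a (T k) ≤ (1 / ((T k - 1 : ℕ) : ℝ)) * ∑ j ∈ Finset.Icc 1 (T k - 1), a j ∧
      (1 / ((T k - 1 : ℕ) : ℝ)) * ∑ j ∈ Finset.Icc 1 (T k - 1), a j ≤ τ (T k - 1) := by
  set b : ℕ → ℝ := fun T => (1 / (T : ℝ)) * ∑ i ∈ Finset.Icc 1 T, a i with hbdef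
  have hbnn : ∀ T, 0 ≤ b T := fun T =>
    mul_nonneg (by positivity) (Finset.sum_nonneg fun i _ => ha i)
  have hb0 : Filter.Tendsto b Filter.atTop (nhds 0) := by
    apply squeeze_zero' (Filter.Eventually.of_forall hbnn) _ hτ0
    filter_upwards [Filter.eventually_ge_atTop 1] with T hT using hb T hT
  -- key: for m ≥ 1, if a (m+1) > b m then b m < b (m+1)
  have key : ∀ m : ℕ, 1 ≤ m → b m < a (m + 1) → b m < b (m + 1) := by
    intro m hm hlt
    have hm0 : (m : ℝ) ≠ 0 := Nat.cast_ne_zero.2 (by omega)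
    have hsum : ∑ i ∈ Finset.Icc 1 (m + 1), a i
        = (∑ i ∈ Finset.Icc 1 m, a i) + a (m + 1) :=
      Finset.sum_Icc_succ_top (by omega) a
    have hS0 : (m : ℝ) * b m = ∑ i ∈ Finset.Icc 1 m, a i := by
      show (m : ℝ) * ((1 / (m : ℝ)) * ∑ i ∈ Finset.Icc 1 m, a i) = _
      field_simp
    have hS1 : ((m : ℝ) + 1) * b (m + 1) = (∑ i ∈ Finset.Icc 1 m, a i) + a (m + 1) := by
      show ((m : ℝ) + 1) * ((1 / ((m + 1 : ℕ) : ℝ)) * ∑ i ∈ Finset.Icc 1 (m + 1), a i) = _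
      rw [hsum]
      push_cast
      field_simp
    have hm1 : (0 : ℝ) < (m : ℝ) + 1 := by positivity
    nlinarith [hS0, hS1, hlt, hm1]
  have freq : ∃ᶠ T in Filter.atTop, 1 < T ∧ a T ≤ b (T - 1) := by
    by_contra hcon
    rw [Filter.not_frequently] at hcon
    rw [Filter.eventually_atTop] at hcon
    obtain ⟨N, hN⟩ := hcon
    set M := max N 2 with hM
    have hmono : ∀ m, M ≤ m → b m < b (m + 1) := by
      intro m hm
      have h1 : 1 ≤ m := le_trans (by omega) hm
      apply key m h1
      have := hN (m + 1) (by omega)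
      push_neg at this
      have := this (by omega)
      simp only [Nat.add_sub_cancel] at this
      linarith
    have hge : ∀ n, M + 1 ≤ n → b (M + 1) ≤ b n := by
      intro n hn
      induction n, hn using Nat.le_induction with
      | base => exact le_rfl
      | succ n hn ih => exact le_trans ih (le_of_lt (hmono n (by omega)))
    have hle0 : b (M + 1) ≤ 0 :=
      ge_of_tendsto hb0 (Filter.eventually_atTop.2 ⟨M + 1, hge⟩)
    have : b M < b (M + 1) := hmono M le_rfl
    linarith [hbnn M]
  obtain ⟨φ, hφmono, hφ⟩ := Filter.extraction_of_frequently_atTop freq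
  refine ⟨φ, hφmono, fun k => ?_⟩
  obtain ⟨h1, h2⟩ := hφ k
  exact ⟨h1, h2, hb (φ k - 1) (by omega)⟩
end

section
/- Fix β_0 > 0, δ ∈ (0,1), and an integer K ≥ 1. Define β_t = β_0(t+1)^δ if t is a multiple of K, and β_t = β_0(nK+1)^δ if nK < t < (n+1)K for a nonnegative integer n. Then with α_0 = β_0 K^{−δ}, γ_0 = β_0, and η_0 = β_0 δ K^{2−δ}: (i) α_0 (t+1)^δ ≤ β_t ≤ γ_0 (t+1)^δ for all t ≥ 0; (ii) 0 ≤ β_t − β_{t−1} ≤ η_0 t^{δ−1} for all t ≥ 1. -/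
/-!
On each block `nK ≤ t < (n+1)K` the sequence is frozen at `β₀ (nK+1)^δ`, so `β t = β₀ (⌊t/K⌋K + 1)^δ`.
Since `t + 1 ≤ K (⌊t/K⌋K + 1)`, this is within a factor `K^δ` of `β₀ (t+1)^δ`. The sequence is
nondecreasing and only jumps at multiples `t = (m+1)K`, from `β₀ (mK+1)^δ` to `β₀ (t+1)^δ`; by
concavity of `x ↦ x^δ` the jump is at most `β₀ δ K (mK+1)^(δ-1)`, and `t ≤ K (mK+1)` turns this into
`β₀ δ K^(2-δ) t^(δ-1)`.
-/

open Real

lemma rpow_sub_rpow_le_mul_rpow_sub_one {a b δ : ℝ} (hb : 0 < b) (hba : b ≤ a) (hδ0 : 0 ≤ δ)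
    (hδ1 : δ ≤ 1) : a ^ δ - b ^ δ ≤ δ * (a - b) * b ^ (δ - 1) := by
  have hs : -1 ≤ (a - b) / b := by linarith [div_nonneg (sub_nonneg.2 hba) hb.le]
  have := calc
    a ^ δ = b ^ δ * (1 + (a - b) / b) ^ δ := by
      rw [one_add_div hb.ne', add_sub_cancel, div_rpow (hb.le.trans hba) hb.le,
        mul_div_cancel₀ _ (rpow_pos_of_pos hb δ).ne']
    _ ≤ b ^ δ * (1 + δ * ((a - b) / b)) := by
      gcongr
      exact rpow_one_add_le_one_add_mul_self hs hδ0 hδ1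
    _ = b ^ δ + δ * (a - b) * b ^ (δ - 1) := by
      rw [rpow_sub_one hb.ne']
      field_simp
  linarith

lemma rpow_neg_mul_rpow_le_rpow {x y c e : ℝ} (hx : 0 ≤ x) (hc : 0 < c) (hxy : x ≤ c * y)
    (he : 0 ≤ e) : c ^ (-e) * x ^ e ≤ y ^ e := by
  calc c ^ (-e) * x ^ e = (x / c) ^ e := by rw [div_rpow hx hc.le, rpow_neg hc.le]; ring
    _ ≤ y ^ e := rpow_le_rpow (by positivity) (by rwa [div_le_iff₀' hc]) he

lemma rpow_le_rpow_neg_mul_rpow_of_nonpos {x y c e : ℝ} (hx : 0 < x) (hc : 0 < c)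
    (hxy : x ≤ c * y) (he : e ≤ 0) : y ^ e ≤ c ^ (-e) * x ^ e := by
  calc y ^ e ≤ (x / c) ^ e :=
        rpow_le_rpow_of_nonpos (by positivity) (by rwa [div_le_iff₀' hc]) he
    _ = c ^ (-e) * x ^ e := by rw [div_rpow hx.le hc.le, rpow_neg hc.le]; ring

lemma rpow_add_mul_sub_rpow_le {δ K m : ℝ} (hδ0 : 0 ≤ δ) (hδ1 : δ ≤ 1) (hK : 1 ≤ K)
    (hm : 0 ≤ m) :
    ((m + 1) * K + 1) ^ δ - (m * K + 1) ^ δ ≤ δ * K ^ (2 - δ) * ((m + 1) * K) ^ (δ - 1) := by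
  have hb : 0 < m * K + 1 := by positivity
  calc ((m + 1) * K + 1) ^ δ - (m * K + 1) ^ δ ≤ δ * K * (m * K + 1) ^ (δ - 1) := by
        have hba : m * K + 1 ≤ (m + 1) * K + 1 := by nlinarith
        convert rpow_sub_rpow_le_mul_rpow_sub_one hb hba hδ0 hδ1 using 2; ring
    _ ≤ δ * K * (K ^ (1 - δ) * ((m + 1) * K) ^ (δ - 1)) := by
        gcongr
        simpa using rpow_le_rpow_neg_mul_rpow_of_nonpos (by positivity) (by positivity)
          (by nlinarith [mul_nonneg (mul_nonneg hm (by linarith : (0 : ℝ) ≤ K)) (sub_nonneg.2 hK)])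
          (by linarith : δ - 1 ≤ 0)
    _ = δ * K ^ (2 - δ) * ((m + 1) * K) ^ (δ - 1) := by
        rw [show 2 - δ = 1 + (1 - δ) by ring, rpow_add (by positivity), rpow_one]
        ring

lemma eq_mul_rpow_div_mul_add_one {β₀ δ : ℝ} {K : ℕ} (hK : 0 < K) {β : ℕ → ℝ}
    (hmul : ∀ t : ℕ, K ∣ t → β t = β₀ * ((t : ℝ) + 1) ^ δ)
    (hbetween : ∀ t n : ℕ, n * K < t → t < (n + 1) * K →
      β t = β₀ * ((n * K : ℕ) + 1 : ℝ) ^ δ) (t : ℕ) :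
    β t = β₀ * ((t / K * K : ℕ) + 1 : ℝ) ^ δ := by
  by_cases hd : K ∣ t
  · rw [Nat.div_mul_cancel hd, hmul t hd]
  · have hlt : t < (t / K + 1) * K := by
      rw [add_one_mul]; exact Nat.lt_div_mul_add hK
    refine hbetween t (t / K) (lt_of_le_of_ne (Nat.div_mul_le_self t K) ?_) hlt
    exact fun h => hd (Dvd.intro_left _ h)

lemma pred_div_of_not_dvd {t K : ℕ} (ht : 1 ≤ t) (hd : ¬K ∣ t) : (t - 1) / K = t / K := by
  obtain ⟨s, rfl⟩ := Nat.exists_eq_add_of_le' ht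
  exact (Nat.succ_div_of_not_dvd hd).symm

lemma mul_add_self_sub_one_div {m K : ℕ} (hK : 0 < K) : (m * K + K - 1) / K = m :=
  Nat.div_eq_of_lt_le (by omega) (by rw [add_one_mul]; omega)

theorem stmt_2 (β₀ δ : ℝ) (hβ₀ : 0 < β₀) (hδ : δ ∈ Set.Ioo (0 : ℝ) 1)
    (K : ℕ) (hK : 1 ≤ K) (β : ℕ → ℝ)
    (hmul : ∀ t : ℕ, K ∣ t → β t = β₀ * ((t : ℝ) + 1) ^ δ)
    (hbetween : ∀ t n : ℕ, n * K < t → t < (n + 1) * K →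
      β t = β₀ * ((n * K : ℕ) + 1 : ℝ) ^ δ) :
    (∀ t : ℕ, β₀ * (K : ℝ) ^ (-δ) * ((t : ℝ) + 1) ^ δ ≤ β t ∧
      β t ≤ β₀ * ((t : ℝ) + 1) ^ δ) ∧
    (∀ t : ℕ, 1 ≤ t →
      0 ≤ β t - β (t - 1) ∧
      β t - β (t - 1) ≤ β₀ * δ * (K : ℝ) ^ (2 - δ) * (t : ℝ) ^ (δ - 1)) := by
  obtain ⟨hδ0, hδ1⟩ := hδ
  have hK₁ : (1 : ℝ) ≤ K := by exact_mod_cast hK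
  have hβ := eq_mul_rpow_div_mul_add_one hK hmul hbetween
  have hmono : Monotone β := fun s t hst => by
    rw [hβ s, hβ t]
    gcongr
  refine ⟨fun t => ⟨?_, ?_⟩, fun t ht => ⟨sub_nonneg.2 (hmono (Nat.sub_le t 1)), ?_⟩⟩
  · have hlt : (t : ℝ) + 1 ≤ (t / K * K : ℕ) + K := by exact_mod_cast Nat.lt_div_mul_add hK
    rw [hβ, mul_assoc]
    gcongr
    exact rpow_neg_mul_rpow_le_rpow (by positivity) (by positivity)
      (by nlinarith [mul_nonneg (Nat.cast_nonneg (t / K * K)) (sub_nonneg.2 hK₁)]) hδ0.le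
  · rw [hβ]
    gcongr
    exact Nat.div_mul_le_self t K
  by_cases hd : K ∣ t
  · obtain ⟨m, rfl⟩ : ∃ m, t = m * K + K := by
      obtain ⟨k, rfl⟩ := hd
      obtain ⟨m, rfl⟩ := Nat.exists_eq_add_one.2 (Nat.pos_of_mul_pos_left ht)
      exact ⟨m, by ring⟩
    rw [hmul _ hd, hβ, mul_add_self_sub_one_div hK]
    push_cast
    calc β₀ * ((m * K + K : ℝ) + 1) ^ δ - β₀ * ((m * K : ℝ) + 1) ^ δ
        = β₀ * (((m + 1) * K + 1 : ℝ) ^ δ - (m * K + 1 : ℝ) ^ δ) := by ring_nf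
      _ ≤ β₀ * (δ * K ^ (2 - δ) * ((m + 1) * K : ℝ) ^ (δ - 1)) := by
        gcongr
        exact rpow_add_mul_sub_rpow_le hδ0.le hδ1.le hK₁ m.cast_nonneg
      _ = β₀ * δ * K ^ (2 - δ) * (m * K + K : ℝ) ^ (δ - 1) := by ring_nf
  · rw [hβ t, hβ (t - 1), pred_div_of_not_dvd ht hd, sub_self]
    positivity
end

section
/- Let f : ℝⁿ → ℝ be differentiable with L-Lipschitz gradient, and let c : ℝⁿ → ℝᵐ be continuously differentiable on a convex set D with ‖J_c(x)‖ ≤ M_c and ‖J_c(x) − J_c(z)‖ ≤ L_c‖x − z‖ for all x, z ∈ D. Then for all x, z ∈ D, y ∈ ℝᵐ, and β > 0: (f(z) + (β/2)‖c(z) − y‖²) − (f(x) + (β/2)‖c(x) − y‖²) ≤ ⟨∇f(x) + β J_c(x)ᵀ(c(x) − y), z − x⟩ + ((L + (L_c‖c(x) − y‖ + M_c²)β)/2)·‖z − x‖². -/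
open scoped RealInnerProductSpace
open Set

/-!
Along the segment `x + t • (z - x)`, the first-order remainder of a map with `K`-Lipschitz
derivative has derivative of norm at most `K t ‖z - x‖²`, so by the fencing form of the mean value
inequality the remainder at `t = 1` is at most `K / 2 * ‖z - x‖²`. For `f` this is the descent
lemma. For the penalty, expanding `‖c z - y‖²` around `c x - y` leaves the linear term
`⟪Jc xᵀ (c x - y), z - x⟫`, a cross term controlled by the remainder bound for `c`, and
`‖c z - c x‖² ≤ Mc² ‖z - x‖²` from the mean value inequality.
-/

theorem Convex.norm_image_sub_sub_le_of_lipschitz_hasFDerivWithin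
    {E G : Type*} [NormedAddCommGroup E] [NormedSpace ℝ E] [NormedAddCommGroup G]
    [NormedSpace ℝ G] {F : E → G} {F' : E → E →L[ℝ] G} {D : Set E} {K : ℝ} (hD : Convex ℝ D)
    (hF : ∀ w ∈ D, HasFDerivWithinAt F (F' w) D w)
    (hF' : ∀ u ∈ D, ∀ v ∈ D, ‖F' u - F' v‖ ≤ K * ‖u - v‖) {x z : E} (hx : x ∈ D) (hz : z ∈ D) :
    ‖F z - F x - F' x (z - x)‖ ≤ K / 2 * ‖z - x‖ ^ 2 := by
  set d := z - x
  set γ : ℝ → E := fun t => x + t • d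
  have hγD : MapsTo γ (Icc 0 1) D := fun t ht => hD.add_smul_sub_mem hx hz ht
  set g : ℝ → G := fun t => F (γ t) - F x - t • F' x d
  have hg : ∀ t ∈ Icc (0 : ℝ) 1, HasDerivWithinAt g (F' (γ t) d - F' x d) (Icc 0 1) t := by
    intro t ht
    have hγ : HasDerivAt γ d t := by
      simpa only [one_smul] using ((hasDerivAt_id' t).smul_const d).const_add x
    have hFγ := (hF (γ t) (hγD ht)).comp_hasDerivWithinAt t hγ.hasDerivWithinAt hγD
    have hlin : HasDerivAt (fun t : ℝ => t • F' x d) (F' x d) t := by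
      simpa only [one_smul] using (hasDerivAt_id' t).smul_const (F' x d)
    exact (hFγ.sub_const (F x)).sub hlin.hasDerivWithinAt
  have hderiv_le : ∀ t ∈ Ico (0 : ℝ) 1, ‖F' (γ t) d - F' x d‖ ≤ K * t * ‖d‖ ^ 2 := by
    intro t ht
    have hγx : γ t - x = t • d := add_sub_cancel_left x _
    calc ‖F' (γ t) d - F' x d‖ = ‖(F' (γ t) - F' x) d‖ := rfl
      _ ≤ ‖F' (γ t) - F' x‖ * ‖d‖ := ContinuousLinearMap.le_opNorm _ _
      _ ≤ K * ‖γ t - x‖ * ‖d‖ := by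
        gcongr; exact hF' _ (hγD (Ico_subset_Icc_self ht)) _ hx
      _ = K * t * ‖d‖ ^ 2 := by
        rw [hγx, norm_smul, Real.norm_of_nonneg ht.1]; ring
  have hB : ∀ t, HasDerivAt (fun t : ℝ => K / 2 * t ^ 2 * ‖d‖ ^ 2) (K * t * ‖d‖ ^ 2) t := fun t =>
    (((hasDerivAt_pow 2 t).const_mul (K / 2)).mul_const (‖d‖ ^ 2)).congr_deriv (by ring)
  have hremainder := image_norm_le_of_norm_deriv_right_le_deriv_boundary
    (fun t ht => (hg t ht).continuousWithinAt)
    (fun t ht => (hg t (Ico_subset_Icc_self ht)).mono_of_mem_nhdsWithin (Icc_mem_nhdsGE_of_mem ht))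
    (by simp [g, γ]) hB hderiv_le (right_mem_Icc.2 zero_le_one)
  simpa [g, γ, d] using hremainder

section InnerProductSpace

variable {E F : Type*} [NormedAddCommGroup E] [InnerProductSpace ℝ E] [CompleteSpace E]
  [NormedAddCommGroup F] [InnerProductSpace ℝ F] [CompleteSpace F]

theorem image_le_add_inner_add_of_lipschitz_gradient {f : E → ℝ} {gradf : E → E} {L : ℝ}
    (hf : ∀ x, HasGradientAt f (gradf x) x) (hL : ∀ x z, ‖gradf x - gradf z‖ ≤ L * ‖x - z‖)
    (x z : E) : f z ≤ f x + ⟪gradf x, z - x⟫ + L / 2 * ‖z - x‖ ^ 2 := by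
  have hTaylor := convex_univ.norm_image_sub_sub_le_of_lipschitz_hasFDerivWithin
    (F' := fun w => InnerProductSpace.toDual ℝ E (gradf w))
    (fun w _ => (hf w).hasFDerivAt.hasFDerivWithinAt)
    (fun u _ v _ => by simpa only [← map_sub, LinearIsometryEquiv.norm_map] using hL u v)
    (mem_univ x) (mem_univ z)
  rw [InnerProductSpace.toDual_apply_apply, Real.norm_eq_abs] at hTaylor
  linarith [le_abs_self (f z - f x - ⟪gradf x, z - x⟫)]

theorem half_norm_sub_sq_le_of_norm_sub_sub_le {J : E →L[ℝ] F} {a b y : F} {d : E} {K M : ℝ}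
    (hT : ‖b - a - J d‖ ≤ K / 2 * ‖d‖ ^ 2) (hM : ‖b - a‖ ≤ M * ‖d‖) :
    ‖b - y‖ ^ 2 / 2 ≤ ‖a - y‖ ^ 2 / 2 + ⟪J.adjoint (a - y), d⟫ +
      (K * ‖a - y‖ + M ^ 2) / 2 * ‖d‖ ^ 2 := by
  have hsq : ‖b - y‖ ^ 2 = ‖a - y‖ ^ 2 + 2 * ⟪a - y, b - a⟫ + ‖b - a‖ ^ 2 := by
    rw [← norm_add_sq_real, sub_add_sub_cancel']
  have hsplit : ⟪a - y, b - a⟫ = ⟪J.adjoint (a - y), d⟫ + ⟪a - y, b - a - J d⟫ := by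
    rw [ContinuousLinearMap.adjoint_inner_left, ← inner_add_right, add_sub_cancel]
  have hrem : ⟪a - y, b - a - J d⟫ ≤ ‖a - y‖ * (K / 2 * ‖d‖ ^ 2) :=
    (real_inner_le_norm _ _).trans (mul_le_mul_of_nonneg_left hT (norm_nonneg _))
  have hM2 : ‖b - a‖ ^ 2 ≤ (M * ‖d‖) ^ 2 := pow_le_pow_left₀ (norm_nonneg _) hM 2
  rw [hsq, hsplit]
  linarith

end InnerProductSpace

theorem stmt_9_general (n m : ℕ)
    (f : EuclideanSpace ℝ (Fin n) → ℝ)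
    (gradf : EuclideanSpace ℝ (Fin n) → EuclideanSpace ℝ (Fin n))
    (c : EuclideanSpace ℝ (Fin n) → EuclideanSpace ℝ (Fin m))
    (Jc : EuclideanSpace ℝ (Fin n) → (EuclideanSpace ℝ (Fin n) →L[ℝ] EuclideanSpace ℝ (Fin m)))
    (D : Set (EuclideanSpace ℝ (Fin n))) (hD : Convex ℝ D)
    (L Lc Mc : ℝ)
    (hf : ∀ x, HasGradientAt f (gradf x) x)
    (hLip : ∀ x z, ‖gradf x - gradf z‖ ≤ L * ‖x - z‖)
    (hc : ∀ x, HasFDerivAt c (Jc x) x)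
    (hJb : ∀ x ∈ D, ‖Jc x‖ ≤ Mc)
    (hJLip : ∀ x ∈ D, ∀ z ∈ D, ‖Jc x - Jc z‖ ≤ Lc * ‖x - z‖) :
    ∀ x ∈ D, ∀ z ∈ D, ∀ (y : EuclideanSpace ℝ (Fin m)) (β : ℝ), 0 < β →
      (f z + (β / 2) * ‖c z - y‖ ^ 2) - (f x + (β / 2) * ‖c x - y‖ ^ 2) ≤
        ⟪gradf x + β • (Jc x).adjoint (c x - y), z - x⟫ +
          ((L + (Lc * ‖c x - y‖ + Mc ^ 2) * β) / 2) * ‖z - x‖ ^ 2 := by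
  intro x hx z hz y β hβ
  have hc' : ∀ w ∈ D, HasFDerivWithinAt c (Jc w) D w := fun w _ => (hc w).hasFDerivWithinAt
  have hf_descent := image_le_add_inner_add_of_lipschitz_gradient hf hLip x z
  have hc_penalty := half_norm_sub_sq_le_of_norm_sub_sub_le (y := y)
    (hD.norm_image_sub_sub_le_of_lipschitz_hasFDerivWithin hc' hJLip hx hz)
    (hD.norm_image_sub_le_of_norm_hasFDerivWithin_le hc' hJb hx hz)
  rw [inner_add_left, real_inner_smul_left]
  linarith [mul_le_mul_of_nonneg_left hc_penalty hβ.le]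

theorem stmt_9 (n m : ℕ)
    (f : EuclideanSpace ℝ (Fin n) → ℝ)
    (gradf : EuclideanSpace ℝ (Fin n) → EuclideanSpace ℝ (Fin n))
    (c : EuclideanSpace ℝ (Fin n) → EuclideanSpace ℝ (Fin m))
    (Jc : EuclideanSpace ℝ (Fin n) → (EuclideanSpace ℝ (Fin n) →L[ℝ] EuclideanSpace ℝ (Fin m)))
    (D : Set (EuclideanSpace ℝ (Fin n))) (hD : Convex ℝ D)
    (L Lc Mc : ℝ) (hL : 0 < L) (hLc : 0 < Lc) (hMc : 0 < Mc)
    (hf : ∀ x, HasGradientAt f (gradf x) x)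
    (hLip : ∀ x z, ‖gradf x - gradf z‖ ≤ L * ‖x - z‖)
    (hc : ∀ x, HasFDerivAt c (Jc x) x)
    (hJb : ∀ x ∈ D, ‖Jc x‖ ≤ Mc)
    (hJLip : ∀ x ∈ D, ∀ z ∈ D, ‖Jc x - Jc z‖ ≤ Lc * ‖x - z‖) :
    ∀ x ∈ D, ∀ z ∈ D, ∀ (y : EuclideanSpace ℝ (Fin m)) (β : ℝ), 0 < β →
      (f z + (β / 2) * ‖c z - y‖ ^ 2) - (f x + (β / 2) * ‖c x - y‖ ^ 2) ≤
        ⟪gradf x + β • (Jc x).adjoint (c x - y), z - x⟫ +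
          ((L + (Lc * ‖c x - y‖ + Mc ^ 2) * β) / 2) * ‖z - x‖ ^ 2 :=
  stmt_9_general n m f gradf c Jc D hD L Lc Mc hf hLip hc hJb hJLip
end

section
/- Let C ⊆ ℝᵐ be a nonempty closed convex set and let c : ℝⁿ → ℝᵐ be a map that is (−C^∞)-convex, i.e., λc(x) + (1−λ)c(z) − c(λx + (1−λ)z) ∈ −C^∞ for all x, z ∈ ℝⁿ and λ ∈ [0,1], where C^∞ is the recession cone of C. Then x ↦ (1/2)·dist(c(x), C)² is a convex function on ℝⁿ. -/
theorem stmt_13 (n m : ℕ) (C : Set (EuclideanSpace ℝ (Fin m)))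
    (hne : C.Nonempty) (hcl : IsClosed C) (hconv : Convex ℝ C)
    (c : EuclideanSpace ℝ (Fin n) → EuclideanSpace ℝ (Fin m))
    (hCconvex : ∀ x z : EuclideanSpace ℝ (Fin n), ∀ l : ℝ, l ∈ Set.Icc (0 : ℝ) 1 →
      -(l • c x + (1 - l) • c z - c (l • x + (1 - l) • z)) ∈
        {d : EuclideanSpace ℝ (Fin m) | ∀ y ∈ C, ∀ t : ℝ, 0 ≤ t → y + t • d ∈ C}) :
    ConvexOn ℝ Set.univ (fun x => (1 / 2) * (Metric.infDist (c x) C) ^ 2) := by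
  refine ⟨convex_univ, fun x _ z _ a b ha hb hab => ?_⟩
  have hb1 : b = 1 - a := by linarith
  set w : EuclideanSpace ℝ (Fin m) := a • c x + b • c z with hw
  set d : EuclideanSpace ℝ (Fin m) :=
    -(a • c x + (1 - a) • c z - c (a • x + (1 - a) • z)) with hd_def
  have hd := hCconvex x z a ⟨ha, by linarith⟩
  have hc : c (a • x + b • z) = w + d := by
    rw [hb1, hw, hd_def, hb1]
    abel
  obtain ⟨px, hpx, hpxd⟩ := hcl.exists_infDist_eq_dist hne (c x)
  obtain ⟨pz, hpz, hpzd⟩ := hcl.exists_infDist_eq_dist hne (c z)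
  have hp : a • px + b • pz ∈ C := hconv hpx hpz ha hb hab
  have hq : a • px + b • pz + d ∈ C := by
    have := hd _ hp 1 zero_le_one
    simpa only [one_smul] using this
  have key : Metric.infDist (c (a • x + b • z)) C ≤
      a * Metric.infDist (c x) C + b * Metric.infDist (c z) C := by
    calc Metric.infDist (c (a • x + b • z)) C ≤ dist (c (a • x + b • z)) (a • px + b • pz + d) :=
          Metric.infDist_le_dist_of_mem hq
      _ = dist w (a • px + b • pz) := by rw [hc, dist_add_right]
      _ ≤ a * dist (c x) px + b * dist (c z) pz := by
          simp only [dist_eq_norm]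
          have h1 : w - (a • px + b • pz) = a • (c x - px) + b • (c z - pz) := by
            rw [hw]; module
          rw [h1]
          calc ‖a • (c x - px) + b • (c z - pz)‖
              ≤ ‖a • (c x - px)‖ + ‖b • (c z - pz)‖ := norm_add_le _ _
            _ = a * ‖c x - px‖ + b * ‖c z - pz‖ := by
                rw [norm_smul, norm_smul, Real.norm_of_nonneg ha, Real.norm_of_nonneg hb]
      _ = a * Metric.infDist (c x) C + b * Metric.infDist (c z) C := by
          rw [hpxd, hpzd]
  have h0 : (0:ℝ) ≤ Metric.infDist (c (a • x + b • z)) C := Metric.infDist_nonneg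
  have h1 : (0:ℝ) ≤ Metric.infDist (c x) C := Metric.infDist_nonneg
  have h2 : (0:ℝ) ≤ Metric.infDist (c z) C := Metric.infDist_nonneg
  simp only [smul_eq_mul]
  nlinarith [sq_nonneg (Metric.infDist (c x) C - Metric.infDist (c z) C),
    mul_nonneg ha hb, sq_nonneg (Metric.infDist (c (a • x + b • z)) C),
    mul_nonneg (mul_nonneg ha hb) (sq_nonneg (Metric.infDist (c x) C - Metric.infDist (c z) C)),
    mul_le_mul_of_nonneg_left key h0]
end

section
/- Let μ_{−1} > 0, ρ ∈ (0,1), η ≥ 1, and suppose a sequence {μ_t}_{t≥0} satisfies μ_0 = ρ^{n_0}μ_{−1} and μ_t ≤ ρ^{n_t} η μ_{t−1} for t ≥ 1, where n_t ≥ 0 are integers, and additionally μ_t ≥ ρ/(L + Mβ_t) for positive constants L, M and a sequence β_t > 0. Then the cumulative count U(t) = ∑_{k=0}^t n_k satisfies U(t) ≤ 1 + ⌈log_{1/ρ}(L + Mβ_t) + log_{1/ρ} μ_{−1} + t·log_{1/ρ} η⌉. -/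
open Finset

theorem stmt_17 (μm : ℝ) (hμm : 0 < μm) (ρ : ℝ) (hρ : ρ ∈ Set.Ioo (0 : ℝ) 1)
    (η : ℝ) (hη : 1 ≤ η) (μ : ℕ → ℝ) (nn : ℕ → ℕ)
    (L M : ℝ) (hL : 0 < L) (hM : 0 < M) (β : ℕ → ℝ) (hβ : ∀ t, 0 < β t)
    (h0 : μ 0 = ρ ^ (nn 0) * μm)
    (hrec : ∀ t : ℕ, 1 ≤ t → μ t ≤ ρ ^ (nn t) * η * μ (t - 1))
    (hlow : ∀ t, ρ / (L + M * β t) ≤ μ t) :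
    ∀ t : ℕ, ((∑ k ∈ Finset.range (t + 1), nn k : ℕ) : ℝ) ≤
      1 + ⌈Real.logb (1 / ρ) (L + M * β t) + Real.logb (1 / ρ) μm +
        (t : ℝ) * Real.logb (1 / ρ) η⌉ := by
  obtain ⟨hρ0, hρ1⟩ := hρ
  have hη0 : (0:ℝ) < η := lt_of_lt_of_le one_pos hη
  have hb : (1:ℝ) < 1 / ρ := by
    rw [lt_div_iff₀ hρ0]; linarith
  have hb0 : (0:ℝ) < 1 / ρ := by positivity
  -- key induction: μ t ≤ η^t * ρ^(U t) * μm
  have key : ∀ t : ℕ, μ t ≤ η ^ t * ρ ^ (∑ k ∈ Finset.range (t + 1), nn k) * μm := by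
    intro t
    induction t with
    | zero => simp [h0]
    | succ t ih =>
      have h1 := hrec (t + 1) (by omega)
      simp only [Nat.add_sub_cancel] at h1
      calc μ (t + 1) ≤ ρ ^ (nn (t + 1)) * η * μ t := h1
        _ ≤ ρ ^ (nn (t + 1)) * η * (η ^ t * ρ ^ (∑ k ∈ Finset.range (t + 1), nn k) * μm) := by
            apply mul_le_mul_of_nonneg_left ih; positivity
        _ = η ^ (t + 1) * ρ ^ (∑ k ∈ Finset.range (t + 1 + 1), nn k) * μm := by
            rw [Finset.sum_range_succ _ (t+1), pow_add, pow_succ]; ring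
  intro t
  set U : ℕ := ∑ k ∈ Finset.range (t + 1), nn k with hU
  have hD : (0:ℝ) < L + M * β t := by have := hβ t; positivity
  have hchain : ρ / (L + M * β t) ≤ η ^ t * ρ ^ U * μm := le_trans (hlow t) (key t)
  have hlog := Real.logb_le_logb_of_le hb (by positivity) hchain
  have hlogρ : Real.logb (1 / ρ) ρ = -1 := by
    rw [Real.logb, Real.log_div one_ne_zero (ne_of_gt hρ0), Real.log_one]
    have : Real.log ρ < 0 := Real.log_neg hρ0 hρ1
    rw [zero_sub, div_neg, div_self this.ne]
  rw [Real.logb_div (ne_of_gt hρ0) (ne_of_gt hD),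
    Real.logb_mul (by positivity) (ne_of_gt hμm),
    Real.logb_mul (by positivity) (by positivity),
    Real.logb_pow, Real.logb_pow, hlogρ] at hlog
  have hUle : (U : ℝ) ≤ 1 + (Real.logb (1 / ρ) (L + M * β t) + Real.logb (1 / ρ) μm
      + (t : ℝ) * Real.logb (1 / ρ) η) := by linarith
  have := Int.le_ceil (Real.logb (1 / ρ) (L + M * β t) + Real.logb (1 / ρ) μm
      + (t : ℝ) * Real.logb (1 / ρ) η)
  push_cast
  push_cast at hUle
  linarith
end
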